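/- arXiv:1708.01426 — 2 statements merged into one kernel-verified Lean document; each statement's English description precedes it below -/
import Mathlib

section
/- Algebraic independence of the quadratic invariants (Theorem 3.1(i), second part). Assume m ≥ 2k. The k(k+1)/2 polynomials r²_ij, 1 ≤ i ≤ j ≤ k, are algebraically independent over ℂ; in particular, the unital subalgebra of P they generate is a polynomial algebra in k(k+1)/2 generators (isomorphic to the symmetric algebra on the span of the r²_ij). -/
open scoped TensorProduct

noncomputable section

/-- Scalar polynomials in the m·k variables x_{li}. -/
abbrev Pscal (m k : ℕ) := MvPolynomial (Fin m × Fin k) ℂ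

/-- The quadratic form Q(z) = -(z₁² + ⋯ + z_m²) on ℂ^m. -/
def Qf (m : ℕ) : QuadraticForm ℂ (Fin m → ℂ) :=
  QuadraticMap.weightedSumSquares ℂ (fun _ : Fin m => (-1 : ℂ))

/-- The complex Clifford algebra C_m. -/
abbrev Cl (m : ℕ) := CliffordAlgebra (Qf m)

/-- The generator e_l of the Clifford algebra. -/
def e (m : ℕ) (l : Fin m) : Cl m := CliffordAlgebra.ι (Qf m) (Pi.single l 1)

/-- C_m-valued polynomials. -/
abbrev PC (m k : ℕ) := Pscal m k ⊗[ℂ] Cl m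

/-- Partial derivative ∂_{x_{li}} acting on C_m-valued polynomials. -/
def pd (m k : ℕ) (l : Fin m) (i : Fin k) : PC m k →ₗ[ℂ] PC m k :=
  LinearMap.rTensor (Cl m) (MvPolynomial.pderiv (l, i)).toLinearMap

/-- The j-th Dirac operator ∂_{x_j} = Σ_l e_l ∂_{x_{lj}}. -/
def dirac (m k : ℕ) (j : Fin k) : PC m k →ₗ[ℂ] PC m k :=
  ∑ l : Fin m,
    (LinearMap.mulLeft ℂ ((1 : Pscal m k) ⊗ₜ[ℂ] e m l)) ∘ₗ pd m k l j

/-- The space M of monogenic polynomials. -/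
def Mono (m k : ℕ) : Submodule ℂ (PC m k) :=
  ⨅ j : Fin k, LinearMap.ker (dirac m k j)

/-- The j-th vector variable x_j = Σ_l e_l x_{lj}. -/
def xv (m k : ℕ) (j : Fin k) : PC m k :=
  ∑ l : Fin m, (MvPolynomial.X (l, j) : Pscal m k) ⊗ₜ[ℂ] e m l

/-- For J = {j₁ < ⋯ < j_r} ⊆ {1,…,k}, the product x_J = x_{j₁} ⋯ x_{j_r}. -/
def xJ (m k : ℕ) (J : Finset (Fin k)) : PC m k :=
  ((J.sort (· ≤ ·)).map (xv m k)).prod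

/-- The invariant r²_ij = Σ_l x_{li} x_{lj}. -/
def rP (m k : ℕ) (i j : Fin k) : Pscal m k :=
  ∑ l : Fin m, MvPolynomial.X (l, i) * MvPolynomial.X (l, j)

/-- Products ∏_{1≤i≤j≤k} r_ij^{2 n_ij} indexed by finitely supported families. -/
def rprod (m k : ℕ) (n : {p : Fin k × Fin k // p.1 ≤ p.2} →₀ ℕ) : Pscal m k :=
  n.prod fun p e => rP m k p.1.1 p.1.2 ^ (2 * e)

/-- The element (∏ r_ij^{2n_ij}) · x_J of P⊗C_m. -/
def basisElem (m k : ℕ) (J : Finset (Fin k))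
    (n : {p : Fin k × Fin k // p.1 ≤ p.2} →₀ ℕ) : PC m k :=
  (rprod m k n ⊗ₜ[ℂ] (1 : Cl m)) * xJ m k J

/-- The operator Δ_ij = Σ_l ∂_{x_{li}} ∂_{x_{lj}} on scalar polynomials. -/
def lap (m k : ℕ) (i j : Fin k) : Pscal m k →ₗ[ℂ] Pscal m k :=
  ∑ l : Fin m,
    (MvPolynomial.pderiv (l, i)).toLinearMap ∘ₗ (MvPolynomial.pderiv (l, j)).toLinearMap

/-- The space H of harmonic scalar polynomials. -/
def Harm (m k : ℕ) : Submodule ℂ (Pscal m k) :=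
  ⨅ p : {p : Fin k × Fin k // p.1 ≤ p.2}, LinearMap.ker (lap m k p.1.1 p.1.2)

/-- The operator Δ_ij acting on C_m-valued polynomials. -/
def lapC (m k : ℕ) (i j : Fin k) : PC m k →ₗ[ℂ] PC m k :=
  ∑ l : Fin m, pd m k l i ∘ₗ pd m k l j

/-- The space of C_m-valued harmonic polynomials. -/
def HarmC (m k : ℕ) : Submodule ℂ (PC m k) :=
  ⨅ p : {p : Fin k × Fin k // p.1 ≤ p.2}, LinearMap.ker (lapC m k p.1.1 p.1.2)

/-- The operator E_ij = Σ_l x_{li} ∂_{x_{lj}} acting on C_m-valued polynomials. -/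
def Eop (m k : ℕ) (i j : Fin k) : PC m k →ₗ[ℂ] PC m k :=
  ∑ l : Fin m,
    (LinearMap.mulLeft ℂ ((MvPolynomial.X (l, i) : Pscal m k) ⊗ₜ[ℂ] (1 : Cl m))) ∘ₗ pd m k l j

/-- The space M^S of simplicial monogenic polynomials. -/
def SimpMono (m k : ℕ) : Submodule ℂ (PC m k) :=
  Mono m k ⊓ ⨅ p : {p : Fin k × Fin k // p.1 < p.2}, LinearMap.ker (Eop m k p.1.1 p.1.2)

/-- Scalar polynomials homogeneous of total degree ℓ. -/
abbrev Pdeg (m k : ℕ) (ℓ : ℕ) : Submodule ℂ (Pscal m k) :=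
  MvPolynomial.homogeneousSubmodule (Fin m × Fin k) ℂ ℓ

/-- Scalar homogeneous polynomials, zero in negative degrees. -/
def PdegZ (m k : ℕ) (n : ℤ) : Submodule ℂ (Pscal m k) :=
  if 0 ≤ n then Pdeg m k n.toNat else ⊥

/-- C_m-valued polynomials homogeneous of total degree ℓ. -/
def PCdeg (m k : ℕ) (ℓ : ℕ) : Submodule ℂ (PC m k) :=
  LinearMap.range (LinearMap.rTensor (Cl m) (Pdeg m k ℓ).subtype)

/-- C_m-valued homogeneous polynomials, zero in negative degrees. -/
def PCdegZ (m k : ℕ) (n : ℤ) : Submodule ℂ (PC m k) :=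
  if 0 ≤ n then PCdeg m k n.toNat else ⊥

/-- Monogenic polynomials homogeneous of given degree, zero in negative degrees. -/
def MdegZ (m k : ℕ) (n : ℤ) : Submodule ℂ (PC m k) :=
  if 0 ≤ n then Mono m k ⊓ PCdeg m k n.toNat else ⊥

/-- C_m-valued polynomials multihomogeneous of degree a_i in the i-th column x_{1i},…,x_{mi}. -/
def PCmdeg (m k : ℕ) (a : Fin k → ℕ) : Submodule ℂ (PC m k) :=
  LinearMap.range (LinearMap.rTensor (Cl m)
    (MvPolynomial.weightedHomogeneousSubmodule ℂ
      (fun p : Fin m × Fin k => Pi.single p.2 1) a).subtype)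

/-- The action of SO(m) on scalar polynomials by x_{li} ↦ Σ_s g_{sl} x_{si}. -/
def soAct (m k : ℕ) (g : Matrix (Fin m) (Fin m) ℝ) : Pscal m k →ₐ[ℂ] Pscal m k :=
  MvPolynomial.aeval fun p : Fin m × Fin k =>
    ∑ s : Fin m, MvPolynomial.C (g s p.1 : ℂ) * MvPolynomial.X (s, p.2)

/-- The Fischer inner product on scalar polynomials. -/
def fischer (m k : ℕ) (f g : Pscal m k) : ℂ :=
  ∑ α ∈ f.support,
    (α.prod fun _ e => (Nat.factorial e : ℂ)) * (starRingEnd ℂ) (f.coeff α) * g.coeff α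

end

/-!
Evaluating the variables `x_{li}` at the entries of an `m × k` matrix `M` sends `r²_ij` to the
entry `(Mᵀ M)_ij` of its Gram matrix, so it suffices to realise the generic symmetric `k × k`
matrix, whose upper entries are independent variables, as a Gram matrix `Mᵀ M`: then the
evaluation maps the family `r²_ij` onto a family of independent variables. Over any commutative
ring containing `1/2` and `i = √-1` this is possible with `2k` rows, because
`(1 + S)ᵀ(1 + S) - (1 - S)ᵀ(1 - S) = 4S` for symmetric `S`, and the minus sign is absorbed by `i`;
the remaining `m - 2k` rows are taken to be zero.
-/

open MvPolynomial
open scoped Matrix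

namespace Matrix

variable {ι κ n R : Type*} [Fintype ι] [Fintype κ] [CommRing R]

theorem exists_transpose_mul_self_eq_of_embedding (e : ι ↪ κ) (A : Matrix ι n R) :
    ∃ M : Matrix κ n R, Mᵀ * M = Aᵀ * A := by
  classical
  let rowEquiv : ι ⊕ {x // x ∉ Set.range e} ≃ κ :=
    (Equiv.sumCongr (Equiv.ofInjective e e.injective) (Equiv.refl _)).trans
      (Equiv.sumCompl (· ∈ Set.range e))
  refine ⟨(fromRows A 0).submatrix rowEquiv.symm id, ?_⟩
  rw [transpose_submatrix, submatrix_mul_equiv, transpose_fromRows, fromCols_mul_fromRows]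
  simp

theorem exists_sum_rows_transpose_mul_self_eq [Fintype n] [DecidableEq n] [Invertible (2 : R)]
    {I : R} (hI : I * I = -1) {S : Matrix n n R} (hS : S.IsSymm) :
    ∃ A : Matrix (n ⊕ n) n R, Aᵀ * A = S := by
  refine ⟨fromRows ((⅟2 : R) • (1 + S)) ((⅟2 * I : R) • (1 - S)), ?_⟩
  rw [transpose_fromRows, fromCols_mul_fromRows]
  simp only [transpose_smul, transpose_add, transpose_sub, transpose_one, hS.eq,
    smul_mul_smul_comm]
  have hsq : (⅟2 * I : R) * (⅟2 * I) = -(⅟2 * ⅟2) := by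
    linear_combination (⅟2 * ⅟2 : R) * hI
  have hdiff : (1 + S) * (1 + S) - (1 - S) * (1 - S) = (2 * 2 : R) • S := by
    simp only [mul_add, add_mul, mul_sub, sub_mul, one_mul, mul_one, mul_smul, two_smul]
    abel
  rw [hsq, neg_smul, ← sub_eq_add_neg, ← smul_sub, hdiff, smul_smul,
    show (⅟2 * ⅟2 * (2 * 2) : R) = 1 by simp [mul_mul_mul_comm], one_smul]

theorem exists_transpose_mul_self_eq [Fintype n] [DecidableEq n] [Invertible (2 : R)]
    {I : R} (hI : I * I = -1) {S : Matrix n n R} (hS : S.IsSymm)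
    (hcard : 2 * Fintype.card n ≤ Fintype.card κ) :
    ∃ M : Matrix κ n R, Mᵀ * M = S := by
  obtain ⟨A, hA⟩ := exists_sum_rows_transpose_mul_self_eq hI hS
  obtain ⟨e⟩ := Function.Embedding.nonempty_of_card_le (α := n ⊕ n) (β := κ)
    (by rwa [Fintype.card_sum, ← two_mul])
  simpa only [hA] using exists_transpose_mul_self_eq_of_embedding e A

end Matrix

noncomputable def genericSymmMatrix (n R : Type*) [LinearOrder n] [CommSemiring R] :
    Matrix n n (MvPolynomial {p : n × n // p.1 ≤ p.2} R) :=
  Matrix.of fun i j => X ⟨(min i j, max i j), min_le_max⟩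

theorem genericSymmMatrix_isSymm (n R : Type*) [LinearOrder n] [CommSemiring R] :
    (genericSymmMatrix n R).IsSymm := by
  ext i j
  simp [genericSymmMatrix, min_comm, max_comm]

theorem genericSymmMatrix_apply_of_le {n : Type*} (R : Type*) [LinearOrder n] [CommSemiring R]
    {i j : n} (h : i ≤ j) : genericSymmMatrix n R i j = X ⟨(i, j), h⟩ := by
  simp [genericSymmMatrix, min_eq_left h, max_eq_right h]

theorem aeval_rP {A : Type*} [CommSemiring A] [Algebra ℂ A] {m k : ℕ}
    (M : Matrix (Fin m) (Fin k) A) (i j : Fin k) :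
    aeval (fun p : Fin m × Fin k => M p.1 p.2) (rP m k i j) = (Mᵀ * M) i j := by
  simp [rP, Matrix.mul_apply]

theorem r_algebraicIndependent_general (m k : ℕ)
    (hrange : 2 * k ≤ m) :
    AlgebraicIndependent ℂ
      (fun p : {p : Fin k × Fin k // p.1 ≤ p.2} => rP m k p.1.1 p.1.2) := by
  let R := MvPolynomial {p : Fin k × Fin k // p.1 ≤ p.2} ℂ
  let _ : Invertible (2 : R) := (Invertible.map C 2).copy 2 (map_ofNat C 2).symm
  have hI : (C Complex.I : R) * C Complex.I = -1 := by
    rw [← map_mul, Complex.I_mul_I, map_neg, map_one]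
  obtain ⟨M, hM⟩ := Matrix.exists_transpose_mul_self_eq (κ := Fin m) hI
    (genericSymmMatrix_isSymm (Fin k) ℂ) (by simpa using hrange)
  refine AlgebraicIndependent.of_comp (aeval fun p : Fin m × Fin k => M p.1 p.2) ?_
  have hX : (aeval fun p : Fin m × Fin k => M p.1 p.2) ∘
      (fun p : {p : Fin k × Fin k // p.1 ≤ p.2} => rP m k p.1.1 p.1.2) = X := by
    ext1 ⟨⟨i, j⟩, hij⟩
    simp only [Function.comp_apply, aeval_rP, hM, genericSymmMatrix_apply_of_le ℂ hij]
  rw [hX]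
  exact algebraicIndependent_X _ _

/-- Algebraic independence of the quadratic invariants (Theorem 3.1(i), second part):
in the stable range, the k(k+1)/2 polynomials r²_ij, 1 ≤ i ≤ j ≤ k, are algebraically
independent over ℂ. -/
theorem r_algebraicIndependent (m k : ℕ) (hm : 1 ≤ m) (hk : 1 ≤ k)
    (hrange : 2 * k ≤ m) :
    AlgebraicIndependent ℂ
      (fun p : {p : Fin k × Fin k // p.1 ≤ p.2} => rP m k p.1.1 p.1.2) :=
  r_algebraicIndependent_general m k hrange
end

section
/- Decomposition of monogenics into simplicial monogenics (Lemma 4.2(i)). Assume m ≥ 2k and let ℓ ∈ ℕ. Then M_ℓ = M^S_ℓ ⊕ Σ_{1≤i<j≤k} E_ji(M_ℓ); that is, M^S_ℓ together with the (not necessarily direct) sum of the subspaces E_ji(M_ℓ) over all pairs 1 ≤ i < j ≤ k spans M_ℓ, and M^S_ℓ ∩ (Σ_{1≤i<j≤k} E_ji(M_ℓ)) = {0}. -/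
open scoped TensorProduct

/-!
Give the `C_m`-valued polynomials the Fischer inner product, for which the monomials tensored
with a basis of `C_m` are orthogonal with `‖x^α ⊗ c_i‖² = α!`. Multiplication by `x_p` is then
adjoint to `∂_p`, so `E_ij` is adjoint to `E_ji`. The `E_ij` preserve the degree and, because
`[∂_{x_r}, E_ij] = δ_ri ∂_{x_j}`, also monogenicity, so they act on the finite-dimensional space
`M_ℓ`. Inside `M_ℓ`, a vector `v` is orthogonal to `K = Σ_{i<j} E_ji(M_ℓ)` iff
`⟨u, E_ij v⟩ = 0` for all `u ∈ M_ℓ` and `i < j`; taking `u = E_ij v`, this means `v ∈ M^S_ℓ`.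
Hence `M_ℓ = M^S_ℓ ⊕ K` is the orthogonal decomposition of `M_ℓ` along `K`.
-/

open scoped TensorProduct ComplexConjugate InnerProductSpace
open MvPolynomial

namespace Submodule

variable {𝕜 E ι : Type*} [RCLike 𝕜] [NormedAddCommGroup E] [InnerProductSpace 𝕜 E]

theorem inf_orthogonal_iSup_map_eq_inf_iInf_ker (V : Submodule 𝕜 E) (A B : ι → E →ₗ[𝕜] E)
    (hA : ∀ i, ∀ v ∈ V, A i v ∈ V) (hAB : ∀ i u v, ⟪B i u, v⟫_𝕜 = ⟪u, A i v⟫_𝕜) :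
    V ⊓ (⨆ i, V.map (B i))ᗮ = V ⊓ ⨅ i, LinearMap.ker (A i) := by
  ext v
  simp only [mem_inf, ← iInf_orthogonal, mem_iInf, mem_orthogonal, mem_map, forall_exists_index,
    and_imp, forall_apply_eq_imp_iff₂, hAB, LinearMap.mem_ker, and_congr_right_iff]
  refine fun hv => forall_congr' fun i => ⟨fun h => ?_, fun h u _ => by rw [h, inner_zero_right]⟩
  exact inner_self_eq_zero.1 (h _ (hA i v hv))

theorem inf_iInf_ker_sup_iSup_map_eq (V : Submodule 𝕜 E) [FiniteDimensional 𝕜 V]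
    (A B : ι → E →ₗ[𝕜] E) (hA : ∀ i, ∀ v ∈ V, A i v ∈ V) (hB : ∀ i, ∀ v ∈ V, B i v ∈ V)
    (hAB : ∀ i u v, ⟪B i u, v⟫_𝕜 = ⟪u, A i v⟫_𝕜) :
    (V ⊓ ⨅ i, LinearMap.ker (A i)) ⊔ ⨆ i, V.map (B i) = V ∧
      (V ⊓ ⨅ i, LinearMap.ker (A i)) ⊓ ⨆ i, V.map (B i) = ⊥ := by
  set K := ⨆ i, V.map (B i)
  have hKV : K ≤ V := iSup_le fun i => map_le_iff_le_comap.2 (hB i)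
  have : FiniteDimensional 𝕜 K := finiteDimensional_of_le hKV
  rw [← inf_orthogonal_iSup_map_eq_inf_iInf_ker V A B hA hAB, sup_comm, inf_comm V]
  exact ⟨sup_orthogonal_inf_of_hasOrthogonalProjection hKV,
    disjoint_iff.1 (K.orthogonal_disjoint.symm.mono_left inf_le_left)⟩

end Submodule

namespace Module.Basis

variable {𝕜 E ι : Type*} [RCLike 𝕜] [AddCommGroup E] [Module 𝕜 E]

noncomputable def weightedForm (b : Basis ι 𝕜 E) (w : ι → ℝ) : E →ₗ⋆[𝕜] E →ₗ[𝕜] 𝕜 :=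
  LinearMap.mk₂'ₛₗ (starRingEnd 𝕜) (RingHom.id 𝕜)
    (fun u v => (b.repr u).sum fun i a => conj a * (w i * b.repr v i))
    (fun u u' v => by rw [map_add, Finsupp.sum_add_index'] <;> intros <;> simp [add_mul])
    (fun c u v => by
      rw [map_smul, Finsupp.sum_smul_index'] <;> intros <;> simp [Finsupp.mul_sum, mul_assoc])
    (fun u v v' => by simp [mul_add, Finsupp.sum_add])
    (fun c u v => by simp [Finsupp.mul_sum, mul_left_comm])

variable (b : Basis ι 𝕜 E) (w : ι → ℝ)

lemma weightedForm_basis [DecidableEq ι] (i j : ι) :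
    b.weightedForm w (b i) (b j) = if i = j then (w i : 𝕜) else 0 := by
  rcases eq_or_ne i j with rfl | h
  · simp [weightedForm]
  · simp [weightedForm, h, Finsupp.single_eq_of_ne h]

lemma weightedForm_isSymm : (b.weightedForm w).IsSymm := by
  classical
  refine (LinearMap.isSymm_iff_basis b).2 fun i j => ?_
  rcases eq_or_ne i j with rfl | h
  · simp [weightedForm_basis]
  · simp [weightedForm_basis, h, h.symm]

lemma weightedForm_self (u : E) :
    b.weightedForm w u u = (((b.repr u).sum fun i a => w i * ‖a‖ ^ 2 : ℝ) : 𝕜) := by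
  simp only [weightedForm, LinearMap.mk₂'ₛₗ_apply, Finsupp.sum, RCLike.ofReal_sum]
  refine Finset.sum_congr rfl fun i _ => ?_
  rw [mul_left_comm, RCLike.conj_mul]
  push_cast
  ring

variable {w}

noncomputable abbrev weightedInnerCore (hw : ∀ i, 0 < w i) : InnerProductSpace.Core 𝕜 E where
  inner u v := b.weightedForm w u v
  conj_inner_symm u v := (b.weightedForm_isSymm w).eq v u
  re_inner_nonneg u := by
    rw [weightedForm_self, RCLike.ofReal_re]
    exact Finset.sum_nonneg fun i _ => mul_nonneg (hw i).le (sq_nonneg _)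
  add_left u u' v := by simp
  smul_left c u v := by simp
  definite u h := by
    rw [weightedForm_self, RCLike.ofReal_eq_zero, Finsupp.sum,
      Finset.sum_eq_zero_iff_of_nonneg fun i _ => mul_nonneg (hw i).le (sq_nonneg _)] at h
    refine b.repr.map_eq_zero_iff.1 (Finsupp.support_eq_empty.1
      (Finset.eq_empty_of_forall_notMem fun i hi => ?_))
    exact Finsupp.mem_support_iff.1 hi (by simpa [(hw i).ne'] using h i hi)

end Module.Basis

lemma Finsupp.prod_factorial_single_one_add {σ R : Type*} [CommSemiring R] (p : σ)
    (α : σ →₀ ℕ) :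
    ((single p 1 + α).prod fun _ n => (n.factorial : R)) =
      (α p + 1) * α.prod fun _ n => (n.factorial : R) := by
  classical
  rw [← mul_prod_erase' _ p _ (fun _ => by simp), ← mul_prod_erase' α p _ (fun _ => by simp),
    erase_add, erase_single, zero_add]
  simp [add_comm 1, Nat.factorial_succ, mul_assoc]

namespace MvPolynomial

variable {𝕜 σ κ N : Type*} [RCLike 𝕜] [AddCommGroup N] [Module 𝕜 N]

noncomputable def fischerBasis (c : Module.Basis κ 𝕜 N) :
    Module.Basis ((σ →₀ ℕ) × κ) 𝕜 (MvPolynomial σ 𝕜 ⊗[𝕜] N) :=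
  (basisMonomials σ 𝕜).tensorProduct c

def fischerWeight (a : (σ →₀ ℕ) × κ) : ℝ := a.1.prod fun _ n => (n.factorial : ℝ)

lemma fischerWeight_pos (a : (σ →₀ ℕ) × κ) : 0 < fischerWeight a :=
  Finset.prod_pos fun _ _ => Nat.cast_pos.2 (Nat.factorial_pos _)

noncomputable def fischerForm (c : Module.Basis κ 𝕜 N) :
    (MvPolynomial σ 𝕜 ⊗[𝕜] N) →ₗ⋆[𝕜] (MvPolynomial σ 𝕜 ⊗[𝕜] N) →ₗ[𝕜] 𝕜 :=
  (fischerBasis c).weightedForm fischerWeight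

variable (c : Module.Basis κ 𝕜 N)

lemma fischerForm_isSymm : (fischerForm (σ := σ) c).IsSymm :=
  (fischerBasis c).weightedForm_isSymm fischerWeight

lemma fischerForm_rTensor_X_mul (p : σ) (u v : MvPolynomial σ 𝕜 ⊗[𝕜] N) :
    fischerForm c ((LinearMap.mulLeft 𝕜 (X p)).rTensor N u) v =
      fischerForm c u ((pderiv p).toLinearMap.rTensor N v) := by
  classical
  suffices (fischerForm c).comp ((LinearMap.mulLeft 𝕜 (X p)).rTensor N) =
      (fischerForm c).compl₂ ((pderiv p).toLinearMap.rTensor N) from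
    LinearMap.congr_fun₂ this u v
  refine LinearMap.ext_basis (fischerBasis c) (fischerBasis c) fun ⟨α, i⟩ ⟨β, j⟩ => ?_
  have hX : (LinearMap.mulLeft 𝕜 (X p)).rTensor N (fischerBasis c (α, i)) =
      fischerBasis c (Finsupp.single p 1 + α, i) := by
    simp [fischerBasis, X, monomial_mul]
  have hD : (pderiv p).toLinearMap.rTensor N (fischerBasis c (β, j)) =
      (β p : 𝕜) • fischerBasis c (β - Finsupp.single p 1, j) := by
    simp [fischerBasis, pderiv_monomial, TensorProduct.smul_tmul', smul_monomial]
  simp only [LinearMap.comp_apply, LinearMap.compl₂_apply, hX, hD, map_smul, fischerForm,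
    Module.Basis.weightedForm_basis, Prod.mk.injEq, fischerWeight]
  rcases eq_or_ne i j with rfl | hij
  · simp only [and_true]
    by_cases hβ : Finsupp.single p 1 + α = β
    · subst hβ
      simp only [add_tsub_cancel_left, if_true, Finsupp.prod_factorial_single_one_add]
      simp [add_comm]
    · have : α = β - Finsupp.single p 1 → β p = 0 := by
        rintro rfl
        by_contra hp
        exact hβ (by rw [add_comm, tsub_add_cancel_of_le (by simpa [Nat.one_le_iff_ne_zero])])
      split_ifs <;> simp_all
  · simp [hij]

lemma fischerForm_rTensor_pderiv (p : σ) (u v : MvPolynomial σ 𝕜 ⊗[𝕜] N) :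
    fischerForm c ((pderiv p).toLinearMap.rTensor N u) v =
      fischerForm c u ((LinearMap.mulLeft 𝕜 (X p)).rTensor N v) := by
  rw [← (fischerForm_isSymm c).eq v, ← fischerForm_rTensor_X_mul, (fischerForm_isSymm c).eq]

end MvPolynomial

lemma LinearMap.rTensor_sum {R M P N ι : Type*} [CommSemiring R] [AddCommMonoid M] [Module R M]
    [AddCommMonoid P] [Module R P] [AddCommMonoid N] [Module R N] (s : Finset ι)
    (f : ι → M →ₗ[R] P) : (∑ i ∈ s, f i).rTensor N = ∑ i ∈ s, (f i).rTensor N :=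
  map_sum (LinearMap.rTensorHom N) f s

namespace MvPolynomial

variable {R : Type*} [CommRing R]

lemma pderiv_pderiv_comm {σ : Type*} (p q : σ) (f : MvPolynomial σ R) :
    pderiv p (pderiv q f) = pderiv q (pderiv p f) := by
  classical
  have : ⁅pderiv p, pderiv q⁆ = (0 : Derivation R (MvPolynomial σ R) (MvPolynomial σ R)) :=
    derivation_ext fun i => by
      rw [Derivation.commutator_apply]
      simp only [pderiv_X, Pi.single_apply]
      split_ifs <;> simp
  rw [← sub_eq_zero, ← Derivation.commutator_apply, this, Derivation.zero_apply]

variable (R) {α β : Type*} [Fintype α]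

noncomputable def polarization (i j : β) :
    MvPolynomial (α × β) R →ₗ[R] MvPolynomial (α × β) R :=
  ∑ s, LinearMap.mulLeft R (X (s, i)) ∘ₗ (pderiv (s, j)).toLinearMap

variable {R}

lemma polarization_apply (i j : β) (f : MvPolynomial (α × β) R) :
    polarization R i j f = ∑ s, X (s, i) * pderiv (s, j) f := by
  simp [polarization]

lemma pderiv_comp_polarization [DecidableEq β] (l : α) (r i j : β) :
    (pderiv (l, r)).toLinearMap ∘ₗ polarization R i j =
      polarization R i j ∘ₗ (pderiv (l, r)).toLinearMap +
        if r = i then (pderiv (l, j)).toLinearMap else 0 := by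
  classical
  refine LinearMap.ext fun f => ?_
  simp only [LinearMap.comp_apply, LinearMap.add_apply, Derivation.coeFn_coe, polarization_apply,
    map_sum, Derivation.leibniz, pderiv_X, smul_eq_mul, Finset.sum_add_distrib,
    pderiv_pderiv_comm (l, r)]
  congr 1
  rcases eq_or_ne r i with rfl | h
  · simp [Pi.single_apply]
  · simp [h]

lemma IsHomogeneous.polarization {f : MvPolynomial (α × β) R} {n : ℕ} (hf : f.IsHomogeneous n)
    (i j : β) : (polarization R i j f).IsHomogeneous n := by
  rw [polarization_apply]
  refine IsHomogeneous.sum _ _ _ fun s _ => ?_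
  obtain _ | n := n
  · rw [← totalDegree_zero_iff_isHomogeneous, totalDegree_eq_zero_iff_eq_C] at hf
    rw [hf, pderiv_C, mul_zero]
    exact isHomogeneous_zero _ _ _
  · simpa [add_comm] using (isHomogeneous_X R (s, i)).mul hf.pderiv

variable {𝕜 κ N : Type*} [RCLike 𝕜] [AddCommGroup N] [Module 𝕜 N] (c : Module.Basis κ 𝕜 N)

lemma fischerForm_rTensor_polarization (i j : β) (u v : MvPolynomial (α × β) 𝕜 ⊗[𝕜] N) :
    fischerForm c ((polarization 𝕜 i j).rTensor N u) v =
      fischerForm c u ((polarization 𝕜 j i).rTensor N v) := by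
  simp only [polarization, LinearMap.rTensor_sum, LinearMap.sum_apply, map_sum,
    LinearMap.rTensor_comp, LinearMap.comp_apply, fischerForm_rTensor_X_mul,
    fischerForm_rTensor_pderiv]

end MvPolynomial

instance {R M : Type*} [CommRing R] [Nontrivial R] [AddCommGroup M] [Module R M]
    [Module.Free R M] [Module.Finite R M] : Module.Finite R (ExteriorAlgebra R M) :=
  Module.Finite.of_basis (Module.finBasis R M).ExteriorAlgebra

instance {R M : Type*} [CommRing R] [Nontrivial R] [Invertible (2 : R)] [AddCommGroup M]
    [Module R M] [Module.Free R M] [Module.Finite R M] (Q : QuadraticForm R M) :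
    Module.Finite R (CliffordAlgebra Q) :=
  Module.Finite.equiv (CliffordAlgebra.equivExterior Q).symm

lemma Algebra.TensorProduct.mulLeft_tmul_one {R A B : Type*} [CommSemiring R] [Semiring A]
    [Algebra R A] [Semiring B] [Algebra R B] (a : A) :
    LinearMap.mulLeft R (a ⊗ₜ[R] (1 : B)) = (LinearMap.mulLeft R a).rTensor B := by
  rw [LinearMap.mulLeft_tmul, LinearMap.mulLeft_one]
  rfl

lemma Algebra.TensorProduct.mulLeft_one_tmul {R A B : Type*} [CommSemiring R] [Semiring A]
    [Algebra R A] [Semiring B] [Algebra R B] (b : B) :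
    LinearMap.mulLeft R ((1 : A) ⊗ₜ[R] b) = (LinearMap.mulLeft R b).lTensor A := by
  rw [LinearMap.mulLeft_tmul, LinearMap.mulLeft_one]
  rfl

lemma LinearMap.rTensor_mem_range_rTensor_subtype {R M N : Type*} [CommSemiring R]
    [AddCommMonoid M] [Module R M] [AddCommMonoid N] [Module R N] {P : Submodule R M}
    {f : M →ₗ[R] M} (hf : ∀ x ∈ P, f x ∈ P) {u : M ⊗[R] N}
    (hu : u ∈ LinearMap.range (P.subtype.rTensor N)) :
    f.rTensor N u ∈ LinearMap.range (P.subtype.rTensor N) := by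
  obtain ⟨t, rfl⟩ := hu
  exact ⟨(f.restrict hf).rTensor N t, by rw [← rTensor_comp_apply, ← rTensor_comp_apply]; rfl⟩

section CliffordValued

variable {m k : ℕ}

lemma Eop_eq_rTensor_polarization (i j : Fin k) :
    Eop m k i j = (polarization ℂ i j).rTensor (Cl m) := by
  simp only [Eop, pd, polarization, LinearMap.rTensor_sum, LinearMap.rTensor_comp,
    Algebra.TensorProduct.mulLeft_tmul_one]

lemma dirac_eq_sum_map (j : Fin k) :
    dirac m k j =
      ∑ l, TensorProduct.map (pderiv (l, j)).toLinearMap (LinearMap.mulLeft ℂ (e m l)) := by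
  simp only [dirac, pd, Algebra.TensorProduct.mulLeft_one_tmul, LinearMap.lTensor_comp_rTensor]

lemma dirac_comp_Eop (r i j : Fin k) :
    dirac m k r ∘ₗ Eop m k i j =
      Eop m k i j ∘ₗ dirac m k r + if r = i then dirac m k j else 0 := by
  simp only [dirac_eq_sum_map, Eop_eq_rTensor_polarization, ← Module.End.mul_eq_comp,
    Finset.sum_mul, Finset.mul_sum]
  simp only [Module.End.mul_eq_comp, LinearMap.map_comp_rTensor, LinearMap.rTensor_comp_map,
    pderiv_comp_polarization, TensorProduct.map_add_left, Finset.sum_add_distrib]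
  split_ifs <;> simp

lemma Eop_mem_Mono (i j : Fin k) {u : PC m k} (hu : u ∈ Mono m k) :
    Eop m k i j u ∈ Mono m k := by
  simp only [Mono, Submodule.mem_iInf, LinearMap.mem_ker] at hu ⊢
  intro r
  rw [← LinearMap.comp_apply, dirac_comp_Eop]
  split_ifs <;> simp [hu]

lemma Eop_mem_PCdeg (i j : Fin k) {ℓ : ℕ} {u : PC m k} (hu : u ∈ PCdeg m k ℓ) :
    Eop m k i j u ∈ PCdeg m k ℓ := by
  rw [Eop_eq_rTensor_polarization]
  exact LinearMap.rTensor_mem_range_rTensor_subtype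
    (fun _ hf => IsHomogeneous.polarization hf i j) hu

instance (ℓ : ℕ) : FiniteDimensional ℂ (PCdeg m k ℓ) :=
  have : Module.Finite ℂ (Pdeg m k ℓ) := Module.Finite.iff_fg.2 (homogeneousSubmodule_fg _ _ ℓ)
  Module.Finite.range _

lemma fischerForm_Eop {κ : Type*} (c : Module.Basis κ ℂ (Cl m)) (i j : Fin k) (u v : PC m k) :
    fischerForm c (Eop m k i j u) v = fischerForm c u (Eop m k j i v) := by
  rw [Eop_eq_rTensor_polarization, Eop_eq_rTensor_polarization]
  exact fischerForm_rTensor_polarization c i j u v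

end CliffordValued

theorem monogenics_decompose_simplicial_general (m k : ℕ) (ℓ : ℕ) :
    (SimpMono m k ⊓ PCdeg m k ℓ) ⊔
        (⨆ p : {p : Fin k × Fin k // p.1 < p.2},
          (Mono m k ⊓ PCdeg m k ℓ).map (Eop m k p.1.2 p.1.1)) =
      Mono m k ⊓ PCdeg m k ℓ ∧
    (SimpMono m k ⊓ PCdeg m k ℓ) ⊓
        (⨆ p : {p : Fin k × Fin k // p.1 < p.2},
          (Mono m k ⊓ PCdeg m k ℓ).map (Eop m k p.1.2 p.1.1)) = ⊥ := by
  let c := Module.Basis.ofVectorSpace ℂ (Cl m)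
  let core := (fischerBasis (σ := Fin m × Fin k) c).weightedInnerCore fischerWeight_pos
  let _ : NormedAddCommGroup (PC m k) := core.toNormedAddCommGroup
  let _ : InnerProductSpace ℂ (PC m k) := InnerProductSpace.ofCore core.toCore
  have hV : ∀ i j, ∀ v ∈ Mono m k ⊓ PCdeg m k ℓ, Eop m k i j v ∈ Mono m k ⊓ PCdeg m k ℓ :=
    fun i j v hv => ⟨Eop_mem_Mono i j hv.1, Eop_mem_PCdeg i j hv.2⟩
  rw [SimpMono, inf_right_comm]
  exact Submodule.inf_iInf_ker_sup_iSup_map_eq _ _ _ (fun _ => hV _ _) (fun _ => hV _ _)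
    fun _ u v => fischerForm_Eop c _ _ u v

/-- Decomposition of monogenics into simplicial monogenics (Lemma 4.2(i)):
M_ℓ = M^S_ℓ ⊕ Σ_{1≤i<j≤k} E_ji(M_ℓ). -/
theorem monogenics_decompose_simplicial (m k : ℕ) (hm : 1 ≤ m) (hk : 1 ≤ k)
    (hrange : 2 * k ≤ m) (ℓ : ℕ) :
    (SimpMono m k ⊓ PCdeg m k ℓ) ⊔
        (⨆ p : {p : Fin k × Fin k // p.1 < p.2},
          (Mono m k ⊓ PCdeg m k ℓ).map (Eop m k p.1.2 p.1.1)) =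
      Mono m k ⊓ PCdeg m k ℓ ∧
    (SimpMono m k ⊓ PCdeg m k ℓ) ⊓
        (⨆ p : {p : Fin k × Fin k // p.1 < p.2},
          (Mono m k ⊓ PCdeg m k ℓ).map (Eop m k p.1.2 p.1.1)) = ⊥ :=
  monogenics_decompose_simplicial_general m k ℓ
end
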